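/- (Correctness of bottom-up join with early projection in the Yannakakis algorithm.) Let T be a join tree with relations R_p over χ(p), and let O ⊆ ⋃_p χ(p) be a set of output variables. For each node p define, bottom-up, J_p = π_{(χ(p) ∪ O) ∩ V_p}( R_p ⋈ (⋈_{c a child of p} J_c) ), where V_p = ⋃_{q in the subtree rooted at p} χ(q). Then π_O(J_root) = π_O( ⋈_p R_p ): the bottom-up cross-node join with projection to node variables and output variables, projected to O at the root, yields exactly the projection of the full natural join to O. -/
import Mathlib


namespace Datalog

/-- A tuple over a set of variables `V`: an assignment of a constant to each variable of `V`. -/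
def Tuple (V : Set ℕ) : Type := V → ℕ

/-- The restriction `σ|_V` of a substitution `σ` to the variables `V`. -/
def restrictT (V : Set ℕ) (σ : ℕ → ℕ) : Tuple V := fun v => σ v.1

/-- Extension of a tuple to a total substitution (an arbitrary default value
outside of its domain; all uses below only depend on values inside the domain). -/
noncomputable def extendT {V : Set ℕ} (t : Tuple V) : ℕ → ℕ := fun v =>
  letI := Classical.propDecidable (v ∈ V)
  if h : v ∈ V then t ⟨v, h⟩ else 0

/-- Two tuples agree on every variable on which both are defined. -/
def agreeOn {Vp Vq : Set ℕ} (t : Tuple Vp) (s : Tuple Vq) : Prop :=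
  ∀ v (h1 : v ∈ Vp) (h2 : v ∈ Vq), t ⟨v, h1⟩ = s ⟨v, h2⟩

/-- The natural join `⋈_p R_p` of a family of relations `R p` of tuples over `χ p`:
the set of tuples over `⋃ p, χ p` whose restriction to each `χ p` lies in `R p`. -/
def natJoin {ι : Type} (χ : ι → Set ℕ) (R : ∀ p, Set (Tuple (χ p))) :
    Set (Tuple (⋃ p, χ p)) :=
  { t | ∀ p, restrictT (χ p) (extendT t) ∈ R p }

/-- The projection `π_O` of a relation: restriction of each tuple to the variables `O`. -/
noncomputable def projT {V : Set ℕ} (O : Set ℕ) (Rel : Set (Tuple V)) : Set (Tuple O) :=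
  (fun t : Tuple V => restrictT O (extendT t)) '' Rel

/-- The semijoin `R_p ⋉ R_q`: tuples of `R_p` for which some tuple of `R_q`
agrees with them on the common variables. -/
def semijoin {Vp Vq : Set ℕ} (Rp : Set (Tuple Vp)) (Rq : Set (Tuple Vq)) : Set (Tuple Vp) :=
  { t ∈ Rp | ∃ s ∈ Rq, agreeOn t s }

/-- A rooted tree on the node type `ι`, given by a parent function under which
every node reaches the root. -/
structure RootedTree (ι : Type) where
  root : ι
  parent : ι → ι
  parent_root : parent root = root
  reaches_root : ∀ p, ∃ n, parent^[n] p = root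

namespace RootedTree

variable {ι : Type}

/-- `p` and `q` are joined by an edge of the tree. -/
def Adj (T : RootedTree ι) (p q : ι) : Prop :=
  p ≠ q ∧ (T.parent p = q ∨ T.parent q = p)

/-- `c` is a child of `p`. -/
def childOf (T : RootedTree ι) (c p : ι) : Prop :=
  T.parent c = p ∧ c ≠ T.root

/-- The set of nodes of the subtree `T_p` rooted at `p`. -/
def descendants (T : RootedTree ι) (p : ι) : Set ι :=
  { q | ∃ n, T.parent^[n] q = p }

/-- The set of nodes `S` induces a connected subtree of `T`: it has a topmost
node reachable from every node of `S` along a parent path staying inside `S`. -/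
def ConnSubtree (T : RootedTree ι) (S : Set ι) : Prop :=
  ∃ top ∈ S, ∀ p ∈ S, ∃ n, T.parent^[n] p = top ∧ ∀ m ≤ n, T.parent^[m] p ∈ S

end RootedTree

/-- `V_p = ⋃_{q in the subtree rooted at p} χ(q)`. -/
def subtreeVars {ι : Type} (T : RootedTree ι) (χ : ι → Set ℕ) (p : ι) : Set ℕ :=
  ⋃ q ∈ T.descendants p, χ q

/-- The variable sets of the family consisting of `R_p` (index `none`) and the
`J_c` for the children `c` of `p` (indices `some c`). -/
def childFamVars {ι : Type} (T : RootedTree ι) (χ : ι → Set ℕ) (O : Set ℕ) (p : ι) :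
    Option { c : ι // T.childOf c p } → Set ℕ
  | none => χ p
  | some c => (χ c.1 ∪ O) ∩ subtreeVars T χ c.1

/-- The relations of the family consisting of `R_p` and the `J_c` for the
children `c` of `p`, so that `natJoin` of this family is `R_p ⋈ (⋈_c J_c)`. -/
def childFamRels {ι : Type} (T : RootedTree ι) (χ : ι → Set ℕ) (O : Set ℕ)
    (R : ∀ p, Set (Tuple (χ p)))
    (J : ∀ p, Set (Tuple ((χ p ∪ O) ∩ subtreeVars T χ p))) (p : ι) :
    ∀ c : Option { c : ι // T.childOf c p }, Set (Tuple (childFamVars T χ O p c))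
  | none => R p
  | some c => J c.1

namespace RootedTree
variable {ι : Type} (T : RootedTree ι)

lemma iterate_root (n : ℕ) : T.parent^[n] T.root = T.root :=
  Function.iterate_fixed T.parent_root n

lemma mem_desc_self (p : ι) : p ∈ T.descendants p := ⟨0, rfl⟩

lemma mem_desc_of_parent_mem {r c : ι} (h : T.parent r ∈ T.descendants c) :
    r ∈ T.descendants c := by
  obtain ⟨k, hk⟩ := h
  exact ⟨k + 1, by rwa [Function.iterate_succ_apply]⟩

lemma eq_root_of_cycle {p : ι} {n : ℕ} (hn : T.parent^[n+1] p = p) : p = T.root := by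
  obtain ⟨d, hd⟩ := T.reaches_root p
  have hcyc : ∀ m : ℕ, T.parent^[m * (n+1)] p = p := by
    intro m
    induction m with
    | zero => simp
    | succ m ih =>
      rw [Nat.succ_mul, Function.iterate_add_apply, hn, ih]
  have hge : ∀ k, d ≤ k → T.parent^[k] p = T.root := by
    intro k hk
    rw [← Nat.sub_add_cancel hk, Function.iterate_add_apply, hd, iterate_root]
  have : T.parent^[d * (n+1)] p = T.root := hge _ (Nat.le_mul_of_pos_right d (Nat.succ_pos n))
  rw [hcyc d] at this
  exact this

lemma not_mem_desc_child {c p : ι} (hc : T.childOf c p) : p ∉ T.descendants c := by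
  rintro ⟨n, hn⟩
  have hcyc : T.parent^[n+1] p = p := by
    rw [Function.iterate_succ_apply', hn, hc.1]
  have hp : p = T.root := T.eq_root_of_cycle hcyc
  apply hc.2
  rw [hp] at hn
  rw [← hn, iterate_root]

lemma desc_child_subset {c p : ι} (hc : T.childOf c p) :
    T.descendants c ⊆ T.descendants p := by
  rintro q ⟨n, hn⟩
  exact ⟨n + 1, by rw [Function.iterate_succ_apply', hn, hc.1]⟩

lemma desc_decomp {q p : ι} (h : q ∈ T.descendants p) :
    q = p ∨ ∃ c, T.childOf c p ∧ q ∈ T.descendants c := by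
  classical
  by_cases hqp : q = p
  · exact Or.inl hqp
  right
  have hex : ∃ n, T.parent^[n] q = p := h
  set n := Nat.find hex with hn
  have hspec : T.parent^[n] q = p := Nat.find_spec hex
  have hn1 : n ≠ 0 := by
    intro h0
    apply hqp
    rw [h0] at hspec
    exact hspec
  obtain ⟨m, hm⟩ := Nat.exists_eq_succ_of_ne_zero hn1
  refine ⟨T.parent^[m] q, ⟨?_, ?_⟩, ⟨m, rfl⟩⟩
  · have h2 := hspec
    rw [hm] at h2
    rwa [Function.iterate_succ_apply'] at h2
  · intro hroot
    have : T.parent^[m] q = p := by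
      have := hspec
      rw [hm, Function.iterate_succ_apply', hroot, T.parent_root] at this
      rw [hroot, this]
    exact absurd this (Nat.find_min hex (by omega))

lemma desc_child_disjoint {c c' p : ι} (hc : T.childOf c p) (hc' : T.childOf c' p)
    (hne : c ≠ c') {r : ι} (h1 : r ∈ T.descendants c) (h2 : r ∈ T.descendants c') : False := by
  obtain ⟨m, hm⟩ := h1
  obtain ⟨m', hm'⟩ := h2
  -- wlog m ≤ m'
  rcases le_or_gt m m' with hle | hlt
  · rcases Nat.lt_or_ge m m' with hlt | hge
    · -- c' = parent^[m'-m] c, m'-m ≥ 1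
      have key : T.parent^[m' - m] c = c' := by
        rw [← hm, ← Function.iterate_add_apply]
        rw [Nat.sub_add_cancel hle, hm']
      obtain ⟨j, hj⟩ := Nat.exists_eq_succ_of_ne_zero (by omega : m' - m ≠ 0)
      have hjp : T.parent^[j] p = c' := by
        rw [← key, hj, Function.iterate_succ_apply, hc.1]
      have hcyc : T.parent^[j+1] p = p := by
        rw [Function.iterate_succ_apply', hjp, hc'.1]
      have hp := T.eq_root_of_cycle hcyc
      apply hc'.2
      rw [← hjp, hp, iterate_root]
    · have : m = m' := le_antisymm hle hge
      rw [this, hm'] at hm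
      exact hne hm.symm
  · have key : T.parent^[m - m'] c' = c := by
      rw [← hm', ← Function.iterate_add_apply]
      rw [Nat.sub_add_cancel (le_of_lt hlt), hm]
    obtain ⟨j, hj⟩ := Nat.exists_eq_succ_of_ne_zero (by omega : m - m' ≠ 0)
    have hjp : T.parent^[j] p = c := by
      rw [← key, hj, Function.iterate_succ_apply, hc'.1]
    have hcyc : T.parent^[j+1] p = p := by
      rw [Function.iterate_succ_apply', hjp, hc.1]
    have hp := T.eq_root_of_cycle hcyc
    apply hc.2
    rw [← hjp, hp, iterate_root]

/-- If a node's parent is a descendant of `c`, so is the node; iterated. -/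
lemma iterate_not_mem_desc {q c : ι} (h : q ∉ T.descendants c) (k : ℕ) :
    T.parent^[k] q ∉ T.descendants c := by
  intro hk
  apply h
  obtain ⟨i, hi⟩ := hk
  exact ⟨i + k, by rw [Function.iterate_add_apply, hi]⟩

/-- the only node of `descendants c` whose parent is outside is `c` itself. -/
lemma eq_of_mem_desc_parent_not_mem {r c : ι} (h : r ∈ T.descendants c)
    (h' : T.parent r ∉ T.descendants c) : r = c := by
  obtain ⟨i, hi⟩ := h
  cases i with
  | zero => exact hi
  | succ i =>
    exact absurd ⟨i, by rwa [Function.iterate_succ_apply] at hi⟩ h'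

end RootedTree

section Conn
variable {ι : Type} {T : RootedTree ι} {χ : ι → Set ℕ}

/-- Key connectivity lemma: a variable occurring both inside and outside the
subtree of `c` must occur at `c`. -/
lemma mem_chi_of_inside_outside
    (hconn : ∀ v : ℕ, (∃ p, v ∈ χ p) → T.ConnSubtree { p | v ∈ χ p })
    {v : ℕ} {c q q' : ι} (hq : q ∈ T.descendants c) (hvq : v ∈ χ q)
    (hq' : q' ∉ T.descendants c) (hvq' : v ∈ χ q') : v ∈ χ c := by
  classical
  obtain ⟨top, htop, hpath⟩ := hconn v ⟨q, hvq⟩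
  -- top is not in the subtree of c
  have htopout : top ∉ T.descendants c := by
    intro htin
    obtain ⟨n', hn', -⟩ := hpath q' hvq'
    exact hq' (by
      obtain ⟨i, hi⟩ := htin
      exact ⟨i + n', by rw [Function.iterate_add_apply, hn', hi]⟩)
  -- path from q to top leaves the subtree of c; it exits exactly at c
  obtain ⟨n, hn, hin⟩ := hpath q hvq
  have hex : ∃ k, T.parent^[k] q ∉ T.descendants c := ⟨n, hn ▸ htopout⟩
  set k0 := Nat.find hex with hk0
  have hk0spec : T.parent^[k0] q ∉ T.descendants c := Nat.find_spec hex
  have hk0ne : k0 ≠ 0 := by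
    intro h0
    rw [h0] at hk0spec
    exact hk0spec hq
  obtain ⟨m, hm⟩ := Nat.exists_eq_succ_of_ne_zero hk0ne
  have hmem : T.parent^[m] q ∈ T.descendants c := by
    by_contra hcon
    exact absurd hcon (by simpa using Nat.find_min hex (by omega : m < k0))
  have hpar : T.parent (T.parent^[m] q) ∉ T.descendants c := by
    have h2 := hk0spec
    rw [hm, Function.iterate_succ_apply'] at h2
    exact h2
  have heqc : T.parent^[m] q = c := T.eq_of_mem_desc_parent_not_mem hmem hpar
  have hk0n : k0 ≤ n := by
    by_contra hcon
    exact absurd (hn ▸ htopout) (by simpa using Nat.find_min hex (by omega : n < k0))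
  have := hin m (by omega)
  rw [heqc] at this
  exact this

end Conn

section Tuples

lemma restrictT_apply (A : Set ℕ) (σ : ℕ → ℕ) (v : A) : restrictT A σ v = σ v.1 := rfl

lemma extendT_restrictT {B : Set ℕ} (σ : ℕ → ℕ) {v : ℕ} (hv : v ∈ B) :
    extendT (restrictT B σ) v = σ v := by
  simp only [extendT, restrictT]
  rw [dif_pos hv]

lemma restrictT_congr {A : Set ℕ} {σ σ' : ℕ → ℕ} (h : ∀ v ∈ A, σ v = σ' v) :
    restrictT A σ = restrictT A σ' :=
  funext fun v => h v.1 v.2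

lemma restrictT_extendT_restrictT {A B : Set ℕ} (hAB : A ⊆ B) (σ : ℕ → ℕ) :
    restrictT A (extendT (restrictT B σ)) = restrictT A σ :=
  funext fun v => extendT_restrictT σ (hAB v.2)

lemma restrictT_extendT {V : Set ℕ} (u : Tuple V) :
    restrictT V (extendT u) = u :=
  funext fun v => dif_pos v.2

lemma restrictT_eq_iff {A : Set ℕ} {σ σ' : ℕ → ℕ} :
    restrictT A σ = restrictT A σ' ↔ ∀ v ∈ A, σ v = σ' v := by
  constructor
  · intro h v hv
    exact congrFun h ⟨v, hv⟩
  · exact restrictT_congr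

end Tuples

section Main

variable {ι : Type} {T : RootedTree ι} {χ : ι → Set ℕ}

lemma mem_subtreeVars {p : ι} {v : ℕ} :
    v ∈ subtreeVars T χ p ↔ ∃ q ∈ T.descendants p, v ∈ χ q := by
  simp [subtreeVars]

lemma chi_subset_subtreeVars {q p : ι} (hq : q ∈ T.descendants p) :
    χ q ⊆ subtreeVars T χ p :=
  fun _ hv => mem_subtreeVars.mpr ⟨q, hq, hv⟩

variable (hconn : ∀ v : ℕ, (∃ p, v ∈ χ p) → T.ConnSubtree { p | v ∈ χ p })

include hconn in
lemma mem_chi_child {c p : ι} {v : ℕ} (hc : T.childOf c p)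
    (hv : v ∈ subtreeVars T χ c) (hvp : v ∈ χ p) : v ∈ χ c := by
  obtain ⟨q, hq, hvq⟩ := mem_subtreeVars.mp hv
  exact mem_chi_of_inside_outside hconn hq hvq (T.not_mem_desc_child hc) hvp

include hconn in
lemma mem_chi_both_children {c c' p : ι} {v : ℕ} (hc : T.childOf c p)
    (hc' : T.childOf c' p) (hne : c ≠ c')
    (hv : v ∈ subtreeVars T χ c) (hv' : v ∈ subtreeVars T χ c') : v ∈ χ c := by
  obtain ⟨q, hq, hvq⟩ := mem_subtreeVars.mp hv
  obtain ⟨q', hq', hvq'⟩ := mem_subtreeVars.mp hv'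
  have hq'out : q' ∉ T.descendants c := fun hin =>
    T.desc_child_disjoint hc hc' hne hin hq'
  exact mem_chi_of_inside_outside hconn hq hvq hq'out hvq'

include hconn in
/-- Characterization of the bottom-up `J p` as the projection of the join of
the relations of the whole subtree below `p`. -/
lemma J_char [Fintype ι]
    (R : ∀ p, Set (Tuple (χ p))) (O : Set ℕ)
    (J : ∀ p, Set (Tuple ((χ p ∪ O) ∩ subtreeVars T χ p)))
    (hJ : ∀ p, J p = projT ((χ p ∪ O) ∩ subtreeVars T χ p)
        (natJoin (childFamVars T χ O p) (childFamRels T χ O R J p))) (p : ι) :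
    J p = { t | ∃ σ : ℕ → ℕ,
      (∀ q ∈ T.descendants p, restrictT (χ q) σ ∈ R q) ∧
      restrictT ((χ p ∪ O) ∩ subtreeVars T χ p) σ = t } := by
  classical
  have key : ∀ n (p : ι), (T.descendants p).ncard ≤ n →
      J p = { t | ∃ σ : ℕ → ℕ,
        (∀ q ∈ T.descendants p, restrictT (χ q) σ ∈ R q) ∧
        restrictT ((χ p ∪ O) ∩ subtreeVars T χ p) σ = t } := by
    intro n
    induction n with
    | zero =>
      intro p hp
      have h0 : (T.descendants p).ncard = 0 := Nat.le_zero.mp hp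
      have := (Set.ncard_eq_zero (Set.toFinite _)).mp h0
      exact absurd (this ▸ T.mem_desc_self p) (Set.notMem_empty p)
    | succ n ih =>
      intro p hp
      -- children have strictly smaller subtrees
      have hcard : ∀ c : ι, T.childOf c p → (T.descendants c).ncard ≤ n := by
        intro c hc
        have hss : T.descendants c ⊂ T.descendants p :=
          ⟨T.desc_child_subset hc,
            fun h => T.not_mem_desc_child hc (h (T.mem_desc_self p))⟩
        have := Set.ncard_lt_ncard hss (Set.toFinite _)
        omega
      rw [hJ p]
      ext t
      simp only [projT, Set.mem_image, Set.mem_setOf_eq]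
      constructor
      · rintro ⟨u, hu, rfl⟩
        have hup : restrictT (χ p) (extendT u) ∈ R p := hu none
        -- use the IH on each child
        have hIH : ∀ c : {c : ι // T.childOf c p}, ∃ σ : ℕ → ℕ,
            (∀ q ∈ T.descendants c.1, restrictT (χ q) σ ∈ R q) ∧
            restrictT ((χ c.1 ∪ O) ∩ subtreeVars T χ c.1) σ =
              restrictT ((χ c.1 ∪ O) ∩ subtreeVars T χ c.1) (extendT u) := by
          intro c
          have h : restrictT ((χ c.1 ∪ O) ∩ subtreeVars T χ c.1) (extendT u) ∈ J c.1 :=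
            hu (some c)
          rw [ih c.1 (hcard c.1 c.2)] at h
          exact h
        choose σs hs1 hs2 using hIH
        -- glue the σs together
        obtain ⟨σ, hσ⟩ : ∃ σ : ℕ → ℕ, ∀ v, σ v =
            if h : ∃ c : {c : ι // T.childOf c p}, v ∈ subtreeVars T χ c.1
            then σs h.choose v else extendT u v := ⟨_, fun v => rfl⟩
        -- σ agrees with σs c on the subtree variables of c
        have hfi : ∀ (c : {c : ι // T.childOf c p}) (v : ℕ),
            v ∈ subtreeVars T χ c.1 → σ v = σs c v := by
          intro c v hv
          have hex : ∃ c' : {c : ι // T.childOf c p}, v ∈ subtreeVars T χ c'.1 := ⟨c, hv⟩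
          rw [hσ v, dif_pos hex]
          by_cases hcc : hex.choose = c
          · rw [hcc]
          · have hc0 : v ∈ subtreeVars T χ hex.choose.1 := hex.choose_spec
            have hne : hex.choose.1 ≠ c.1 := fun h => hcc (Subtype.ext h)
            have h1 : v ∈ χ hex.choose.1 :=
              mem_chi_both_children hconn hex.choose.2 c.2 hne hc0 hv
            have h2 : v ∈ χ c.1 :=
              mem_chi_both_children hconn c.2 hex.choose.2 (Ne.symm hne) hv hc0
            have e1 : σs hex.choose v = extendT u v :=
              congrFun (hs2 hex.choose) ⟨v, ⟨Or.inl h1, hc0⟩⟩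
            have e2 : σs c v = extendT u v :=
              congrFun (hs2 c) ⟨v, ⟨Or.inl h2, hv⟩⟩
            rw [e1, e2]
        -- σ agrees with extendT u on χ p ∪ O
        have hfii : ∀ v, v ∈ χ p ∪ O → σ v = extendT u v := by
          intro v hv
          rw [hσ v]
          split
          · next h =>
            have hc0 : v ∈ subtreeVars T χ h.choose.1 := h.choose_spec
            have hvS : v ∈ (χ h.choose.1 ∪ O) ∩ subtreeVars T χ h.choose.1 := by
              rcases hv with hv | hv
              · exact ⟨Or.inl (mem_chi_child hconn h.choose.2 hc0 hv), hc0⟩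
              · exact ⟨Or.inr hv, hc0⟩
            exact congrFun (hs2 h.choose) ⟨v, hvS⟩
          · rfl
        refine ⟨σ, ?_, ?_⟩
        · intro q hq
          rcases T.desc_decomp hq with rfl | ⟨c, hc, hqc⟩
          · have : restrictT (χ q) σ = restrictT (χ q) (extendT u) :=
              restrictT_congr fun v hv => hfii v (Or.inl hv)
            rw [this]; exact hup
          · have : restrictT (χ q) σ = restrictT (χ q) (σs ⟨c, hc⟩) :=
              restrictT_congr fun v hv => hfi ⟨c, hc⟩ v (chi_subset_subtreeVars hqc hv)
            rw [this]; exact hs1 ⟨c, hc⟩ q hqc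
        · exact restrictT_congr fun v hv => hfii v hv.1
      · rintro ⟨σ, hsat, rfl⟩
        -- the variables produced at p are covered by the child family
        have hSpU : (χ p ∪ O) ∩ subtreeVars T χ p ⊆
            ⋃ i, childFamVars T χ O p i := by
          rintro v ⟨hvpO, hvV⟩
          obtain ⟨q, hq, hvq⟩ := mem_subtreeVars.mp hvV
          rcases T.desc_decomp hq with rfl | ⟨c, hc, hqc⟩
          · exact Set.mem_iUnion.mpr ⟨none, hvq⟩
          · have hvc : v ∈ subtreeVars T χ c := chi_subset_subtreeVars hqc hvq
            have hvcO : v ∈ χ c ∪ O := by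
              rcases hvpO with hv | hv
              · exact Or.inl (mem_chi_child hconn hc hvc hv)
              · exact Or.inr hv
            exact Set.mem_iUnion.mpr ⟨some ⟨c, hc⟩, ⟨hvcO, hvc⟩⟩
        refine ⟨restrictT (⋃ i, childFamVars T χ O p i) σ, ?_, ?_⟩
        · intro i
          have hsub : childFamVars T χ O p i ⊆ ⋃ i, childFamVars T χ O p i :=
            Set.subset_iUnion _ i
          show restrictT (childFamVars T χ O p i)
            (extendT (restrictT (⋃ i, childFamVars T χ O p i) σ)) ∈ _
          rw [restrictT_extendT_restrictT hsub]
          cases i with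
          | none =>
            exact hsat p (T.mem_desc_self p)
          | some c =>
            show restrictT ((χ c.1 ∪ O) ∩ subtreeVars T χ c.1) σ ∈ J c.1
            rw [ih c.1 (hcard c.1 c.2)]
            exact ⟨σ, fun q hq => hsat q (T.desc_child_subset c.2 hq), rfl⟩
        · rw [restrictT_extendT_restrictT hSpU]
  exact key _ p le_rfl

end Main


/-- correctness of bottom-up join with early projection in the
Yannakakis algorithm: if `J_p = π_{(χ(p) ∪ O) ∩ V_p}(R_p ⋈ (⋈_{c child of p} J_c))`
bottom-up, then `π_O(J_root) = π_O(⋈_p R_p)`. -/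
theorem yannakakis_bottom_up (ι : Type) [Fintype ι]
    (T : RootedTree ι) (χ : ι → Set ℕ) (hfin : ∀ p, (χ p).Finite)
    (hconn : ∀ v : ℕ, (∃ p, v ∈ χ p) → T.ConnSubtree { p | v ∈ χ p })
    (R : ∀ p, Set (Tuple (χ p)))
    (O : Set ℕ) (hO : O ⊆ ⋃ p, χ p)
    (J : ∀ p, Set (Tuple ((χ p ∪ O) ∩ subtreeVars T χ p)))
    (hJ : ∀ p, J p = projT ((χ p ∪ O) ∩ subtreeVars T χ p)
        (natJoin (childFamVars T χ O p) (childFamRels T χ O R J p))) :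
    projT O (J T.root) = projT O (natJoin χ R) := by
  classical
  have hVroot : subtreeVars T χ T.root = ⋃ q, χ q := by
    have hdesc : T.descendants T.root = Set.univ :=
      Set.eq_univ_of_forall fun p => T.reaches_root p
    rw [subtreeVars, hdesc]
    simp
  have hOsub : O ⊆ (χ T.root ∪ O) ∩ subtreeVars T χ T.root := fun v hv =>
    ⟨Or.inr hv, hVroot ▸ hO hv⟩
  rw [J_char hconn R O J hJ T.root]
  ext t
  simp only [projT, Set.mem_image, Set.mem_setOf_eq]
  constructor
  · rintro ⟨u, ⟨σ, hsat, rfl⟩, rfl⟩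
    refine ⟨restrictT (⋃ q, χ q) σ, ?_, ?_⟩
    · intro q
      show restrictT (χ q) (extendT (restrictT (⋃ q, χ q) σ)) ∈ R q
      rw [restrictT_extendT_restrictT (Set.subset_iUnion χ q)]
      exact hsat q (T.reaches_root q)
    · rw [restrictT_extendT_restrictT hO, restrictT_extendT_restrictT hOsub]
  · rintro ⟨s, hs, rfl⟩
    refine ⟨restrictT ((χ T.root ∪ O) ∩ subtreeVars T χ T.root) (extendT s),
      ⟨extendT s, fun q _ => hs q, rfl⟩, ?_⟩
    rw [restrictT_extendT_restrictT hOsub]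

end Datalog
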